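/- Forward parameter-Lipschitz bound. Consider the ResNet with input ‖x‖₂ ≤ B and activation satisfying the stated regularity conditions. There exists a constant K depending only on L, α, σ_v, σ_w, C_φ, B, and d (and not on n) such that for all parameter vectors θ, θ̃ both satisfying the spectral bounds, and for every ℓ ∈ {0,1,…,L} (respectively ℓ ∈ {1,…,L}): ‖x^{(ℓ)}(x;θ) − x^{(ℓ)}(x;θ̃)‖₂ ≤ K·‖θ − θ̃‖₂ and ‖g^{(ℓ)}(x;θ) − g^{(ℓ)}(x;θ̃)‖₂ ≤ K·‖θ − θ̃‖₂, where ‖θ − θ̃‖₂ is the Euclidean norm of the difference of the full (vectorized) parameter vectors. -/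

import Mathlib

open MeasureTheory ProbabilityTheory Filter

noncomputable section

/-- Index type for all ResNet parameters: w^{(L+1)}, {W^{(ℓ)}}, {V^{(ℓ)}}, U. -/
abbrev ParamIdx (n L d : ℕ) : Type :=
  (Fin n) ⊕ (Fin L × Fin n × Fin n) ⊕ (Fin L × Fin n × Fin n) ⊕ (Fin n × Fin d)

/-- The full (vectorized) parameter vector. -/
abbrev Params (n L d : ℕ) : Type := ParamIdx n L d → ℝ

/-- Last-layer weight vector w^{(L+1)}. -/
def wOut {n L d : ℕ} (θ : Params n L d) : Fin n → ℝ := fun i => θ (Sum.inl i)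

/-- W^{(ℓ)} for ℓ = 1,…,L (zero outside this range). -/
def Wmat {n L d : ℕ} (θ : Params n L d) (ℓ : ℕ) : Matrix (Fin n) (Fin n) ℝ :=
  if h : 1 ≤ ℓ ∧ ℓ ≤ L then
    Matrix.of fun i j => θ (Sum.inr (Sum.inl (⟨ℓ - 1, by omega⟩, i, j)))
  else 0

/-- V^{(ℓ)} for ℓ = 1,…,L (zero outside this range). -/
def Vmat {n L d : ℕ} (θ : Params n L d) (ℓ : ℕ) : Matrix (Fin n) (Fin n) ℝ :=
  if h : 1 ≤ ℓ ∧ ℓ ≤ L then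
    Matrix.of fun i j => θ (Sum.inr (Sum.inr (Sum.inl (⟨ℓ - 1, by omega⟩, i, j))))
  else 0

/-- Input lifting matrix U. -/
def Umat {n L d : ℕ} (θ : Params n L d) : Matrix (Fin n) (Fin d) ℝ :=
  Matrix.of fun i j => θ (Sum.inr (Sum.inr (Sum.inr (i, j))))

/-- Euclidean (ℓ²) norm of a finite vector. -/
def l2norm {k : ℕ} (v : Fin k → ℝ) : ℝ := Real.sqrt (∑ i, (v i) ^ 2)

/-- Euclidean norm of a full parameter vector. -/
def paramNorm {n L d : ℕ} (θ : Params n L d) : ℝ := Real.sqrt (∑ i, (θ i) ^ 2)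

/-- Spectral (operator) norm of a matrix. -/
def specNorm {m k : ℕ} (A : Matrix (Fin m) (Fin k) ℝ) : ℝ :=
  sSup ((fun v => l2norm (A.mulVec v)) '' {v | l2norm v ≤ 1})

/-- Smallest singular value of a matrix. -/
def singMin {m k : ℕ} (A : Matrix (Fin m) (Fin k) ℝ) : ℝ :=
  sInf ((fun v => l2norm (A.mulVec v)) '' {v | l2norm v = 1})

/-- Frobenius norm of a matrix. -/
def frobNorm {m k : ℕ} (A : Matrix (Fin m) (Fin k) ℝ) : ℝ :=
  Real.sqrt (∑ i, ∑ j, (A i j) ^ 2)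

/-- Layer activations x^{(ℓ)} of the ResNet. -/
def xvec {n L d : ℕ} (φ : ℝ → ℝ) (α σv σw : ℝ) (θ : Params n L d) (x : Fin d → ℝ) :
    ℕ → Fin n → ℝ
  | 0 => (Real.sqrt d)⁻¹ • (Umat θ).mulVec x
  | ℓ + 1 =>
      xvec φ α σv σw θ x ℓ +
        (α * σv / Real.sqrt n) • (Vmat θ (ℓ + 1)).mulVec
          (fun i => φ ((σw / Real.sqrt n) *
              (Wmat θ (ℓ + 1)).mulVec (xvec φ α σv σw θ x ℓ) i))

/-- Pre-activations g^{(ℓ)} of the ResNet (meaningful for ℓ = 1,…,L). -/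
def gvec {n L d : ℕ} (φ : ℝ → ℝ) (α σv σw : ℝ) (θ : Params n L d) (x : Fin d → ℝ)
    (ℓ : ℕ) : Fin n → ℝ :=
  (σw / Real.sqrt n) • (Wmat θ ℓ).mulVec (xvec φ α σv σw θ x (ℓ - 1))

/-- The ResNet output f(x;θ). -/
def fnet {n L d : ℕ} (φ : ℝ → ℝ) (α σv σw : ℝ) (θ : Params n L d) (x : Fin d → ℝ) : ℝ :=
  (σw / Real.sqrt n) * ∑ i, wOut θ i * xvec φ α σv σw θ x L i

/-- The i.i.d. standard Gaussian initialization measure on the parameters. -/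
def initMeasure (n L d : ℕ) : Measure (Params n L d) :=
  Measure.pi fun _ => gaussianReal 0 1

/-- Standard Gaussian on ℝ². -/
def stdGauss2 : Measure (ℝ × ℝ) := (gaussianReal 0 1).prod (gaussianReal 0 1)

/-- The centered bivariate Gaussian N(0,Σ) for Σ = [[K11,K12],[K12,K22]] positive
semidefinite, realized via the Cholesky factorization. -/
def biGauss (K11 K12 K22 : ℝ) : Measure (ℝ × ℝ) :=
  stdGauss2.map (fun z => (Real.sqrt K11 * z.1,
    (K12 / Real.sqrt K11) * z.1 + Real.sqrt (K22 - K12 ^ 2 / K11) * z.2))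

/-- T(Σ) = E_{(u,v)∼N(0,Σ)}[φ(u)φ(v)]. -/
def TT (φ : ℝ → ℝ) (K11 K12 K22 : ℝ) : ℝ :=
  ∫ uv, φ uv.1 * φ uv.2 ∂(biGauss K11 K12 K22)

/-- Ṫ(Σ) = E_{(u,v)∼N(0,Σ)}[φ'(u)φ'(v)]. -/
def TTdot (φ : ℝ → ℝ) (K11 K12 K22 : ℝ) : ℝ :=
  ∫ uv, deriv φ uv.1 * deriv φ uv.2 ∂(biGauss K11 K12 K22)

/-- The limiting GP kernels: `Kker … ℓ x y` is K^{(ℓ+1)}(x,y); in particular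
`Kker … 0 x y = K^{(1)}(x,y) = (σ_w²/d)·xᵀy` and `Kker … L x y = K^{(L+1)}(x,y)`. -/
def Kker (φ : ℝ → ℝ) (α σv σw : ℝ) {d : ℕ} : ℕ → (Fin d → ℝ) → (Fin d → ℝ) → ℝ
  | 0 => fun x y => σw ^ 2 / d * ∑ i, x i * y i
  | ℓ + 1 => fun x y =>
      Kker φ α σv σw ℓ x y + α ^ 2 * σv ^ 2 * σw ^ 2 *
        TT φ (Kker φ α σv σw ℓ x x) (Kker φ α σv σw ℓ x y) (Kker φ α σv σw ℓ y y)


/-- The spectral bounds on a parameter vector: ‖w^{(L+1)}‖₂ ≤ 2√n, ‖U‖ ≤ √d + 2√n, and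
‖W^{(ℓ)}‖, ‖V^{(ℓ)}‖ ≤ 3√n for ℓ = 1,…,L. -/
def SpectralBounds {n L d : ℕ} (θ : Params n L d) : Prop :=
  l2norm (wOut θ) ≤ 2 * Real.sqrt n ∧
  specNorm (Umat θ) ≤ Real.sqrt d + 2 * Real.sqrt n ∧
  ∀ ℓ : ℕ, 1 ≤ ℓ → ℓ ≤ L →
    specNorm (Wmat θ ℓ) ≤ 3 * Real.sqrt n ∧ specNorm (Vmat θ ℓ) ≤ 3 * Real.sqrt n

/-!
On the spectral-bound set, each residual block `h ↦ h + (α σ_v/√n) V φ((σ_w/√n) W h)` enlarges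
norms by at most the factor `c = 1 + 9κ`, where `κ = α σ_v σ_w C_φ`: the operator norms `3√n` of `V`
and `W` cancel the two `1/√n` scalings. Hence `‖x^{(ℓ)}‖ ≤ 3B√n c^ℓ`. When the weights are perturbed,
the operator norms again give the factor `c` on the layer difference. The weight differences are
controlled by their Frobenius norms, which are at most `‖θ - θ̃‖`. They act on activations of size
`O(√n)`, and these are divided by `√n`, so each layer adds `18κ B c^ℓ ‖θ - θ̃‖`. By induction,
`‖x^{(ℓ)} - x̃^{(ℓ)}‖ ≤ B c^ℓ (1 + 18κℓ) ‖θ - θ̃‖`, and `g^{(ℓ+1)}` inherits the bound through one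
more application of `W`. Nothing here depends on `n`.
-/

open Matrix

section EuclideanNorm

variable {k : ℕ}

lemma l2norm_eq_norm (v : Fin k → ℝ) :
    l2norm v = ‖(WithLp.toLp 2 v : EuclideanSpace ℝ (Fin k))‖ := by
  simp [EuclideanSpace.norm_eq, l2norm, Real.norm_eq_abs, sq_abs]

lemma l2norm_nonneg (v : Fin k → ℝ) : 0 ≤ l2norm v := Real.sqrt_nonneg _

lemma l2norm_add_le (u v : Fin k → ℝ) : l2norm (u + v) ≤ l2norm u + l2norm v := by
  simpa [l2norm_eq_norm] using norm_add_le (WithLp.toLp 2 u : EuclideanSpace ℝ (Fin k)) _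

lemma l2norm_smul (c : ℝ) (v : Fin k → ℝ) : l2norm (c • v) = |c| * l2norm v := by
  simpa [l2norm_eq_norm] using norm_smul c (WithLp.toLp 2 v : EuclideanSpace ℝ (Fin k))

lemma l2norm_eq_zero_iff {v : Fin k → ℝ} : l2norm v = 0 ↔ v = 0 := by
  simp [l2norm_eq_norm]

lemma l2norm_fin_zero (v : Fin 0 → ℝ) : l2norm v = 0 := by
  simp [l2norm]

lemma l2norm_le_mul_of_abs_le {t : ℝ} (ht : 0 ≤ t) {u v : Fin k → ℝ}
    (h : ∀ i, |u i| ≤ t * |v i|) : l2norm u ≤ t * l2norm v := by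
  have hsq : ∑ i, u i ^ 2 ≤ t ^ 2 * ∑ i, v i ^ 2 := by
    rw [Finset.mul_sum]
    refine Finset.sum_le_sum fun i _ => ?_
    rw [← sq_abs (u i), ← sq_abs (v i), ← mul_pow]
    exact pow_le_pow_left₀ (abs_nonneg _) (h i) 2
  calc l2norm u ≤ √(t ^ 2 * ∑ i, v i ^ 2) := Real.sqrt_le_sqrt hsq
    _ = t * l2norm v := by rw [Real.sqrt_mul (sq_nonneg t), Real.sqrt_sq ht]; rfl

lemma nonneg_of_abs_le_mul_abs {f : ℝ → ℝ} {C : ℝ} (hf : ∀ z, |f z| ≤ C * |z|) : 0 ≤ C := by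
  simpa using (abs_nonneg _).trans (hf 1)

lemma l2norm_comp_le {f : ℝ → ℝ} {C : ℝ} (hf : ∀ z, |f z| ≤ C * |z|) (v : Fin k → ℝ) :
    l2norm (f ∘ v) ≤ C * l2norm v :=
  l2norm_le_mul_of_abs_le (nonneg_of_abs_le_mul_abs hf) fun i => hf (v i)

lemma l2norm_comp_sub_comp_le {f : ℝ → ℝ} {C : ℝ} (hf : ∀ z z', |f z - f z'| ≤ C * |z - z'|)
    (u v : Fin k → ℝ) : l2norm (f ∘ u - f ∘ v) ≤ C * l2norm (u - v) :=
  l2norm_le_mul_of_abs_le (by simpa using (abs_nonneg _).trans (hf 1 0)) fun i => hf (u i) (v i)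

end EuclideanNorm

section MatrixNorms

variable {m k : ℕ}

lemma frobNorm_nonneg (A : Matrix (Fin m) (Fin k) ℝ) : 0 ≤ frobNorm A := Real.sqrt_nonneg _

lemma l2norm_mulVec_le_frobNorm (A : Matrix (Fin m) (Fin k) ℝ) (v : Fin k → ℝ) :
    l2norm (A *ᵥ v) ≤ frobNorm A * l2norm v := by
  have hrow (i : Fin m) : (A *ᵥ v) i ^ 2 ≤ (∑ j, A i j ^ 2) * ∑ j, v j ^ 2 :=
    Finset.sum_mul_sq_le_sq_mul_sq Finset.univ (A i) v
  calc l2norm (A *ᵥ v) ≤ √((∑ i, ∑ j, A i j ^ 2) * ∑ j, v j ^ 2) := by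
        refine Real.sqrt_le_sqrt ?_
        rw [Finset.sum_mul]
        exact Finset.sum_le_sum fun i _ => hrow i
    _ = frobNorm A * l2norm v := Real.sqrt_mul (by positivity) _

lemma specNorm_bddAbove (A : Matrix (Fin m) (Fin k) ℝ) :
    BddAbove ((fun v => l2norm (A *ᵥ v)) '' {v | l2norm v ≤ 1}) := by
  refine ⟨frobNorm A, ?_⟩
  rintro _ ⟨v, hv, rfl⟩
  calc l2norm (A *ᵥ v) ≤ frobNorm A * l2norm v := l2norm_mulVec_le_frobNorm A v
    _ ≤ frobNorm A := mul_le_of_le_one_right (frobNorm_nonneg A) hv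

lemma l2norm_mulVec_le_specNorm (A : Matrix (Fin m) (Fin k) ℝ) (v : Fin k → ℝ) :
    l2norm (A *ᵥ v) ≤ specNorm A * l2norm v := by
  rcases (l2norm_nonneg v).eq_or_lt with hv | hv
  · obtain rfl : v = 0 := l2norm_eq_zero_iff.mp hv.symm
    simp [l2norm]
  have hunit : l2norm ((l2norm v)⁻¹ • v) ≤ 1 := by
    rw [l2norm_smul, abs_of_pos (inv_pos.mpr hv), inv_mul_cancel₀ hv.ne']
  have hle : l2norm (A *ᵥ ((l2norm v)⁻¹ • v)) ≤ specNorm A :=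
    le_csSup (specNorm_bddAbove A) ⟨_, hunit, rfl⟩
  rw [mulVec_smul, l2norm_smul, abs_of_pos (inv_pos.mpr hv), inv_mul_le_iff₀ hv] at hle
  linarith

lemma specNorm_zero : specNorm (0 : Matrix (Fin m) (Fin k) ℝ) = 0 := by
  have hne : {v : Fin k → ℝ | l2norm v ≤ 1}.Nonempty := ⟨0, by simp [l2norm]⟩
  simp only [specNorm, zero_mulVec]
  rw [hne.image_const]
  simp [l2norm]

lemma l2norm_mulVec_sub_mulVec_le (A A' : Matrix (Fin m) (Fin k) ℝ) (u u' : Fin k → ℝ) :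
    l2norm (A *ᵥ u - A' *ᵥ u') ≤ frobNorm (A - A') * l2norm u + specNorm A' * l2norm (u - u') := by
  have hsplit : A *ᵥ u - A' *ᵥ u' = (A - A') *ᵥ u + A' *ᵥ (u - u') := by
    rw [sub_mulVec, mulVec_sub]; abel
  rw [hsplit]
  exact (l2norm_add_le _ _).trans
    (add_le_add (l2norm_mulVec_le_frobNorm _ _) (l2norm_mulVec_le_specNorm _ _))

end MatrixNorms

section Parameters

variable {n L d : ℕ}

lemma paramNorm_nonneg (θ : Params n L d) : 0 ≤ paramNorm θ := Real.sqrt_nonneg _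

lemma frobNorm_le_paramNorm_of_embedding {m k : ℕ} (θ : Params n L d)
    (A : Matrix (Fin m) (Fin k) ℝ) (e : Fin m × Fin k ↪ ParamIdx n L d)
    (hA : ∀ i j, A i j = θ (e (i, j))) : frobNorm A ≤ paramNorm θ := by
  refine Real.sqrt_le_sqrt ?_
  calc ∑ i, ∑ j, A i j ^ 2 = ∑ p, θ (e p) ^ 2 := by
        simp_rw [hA]; exact (Fintype.sum_prod_type fun p => θ (e p) ^ 2).symm
    _ = ∑ q ∈ Finset.univ.map e, θ q ^ 2 := (Finset.sum_map _ e fun q => θ q ^ 2).symm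
    _ ≤ ∑ q, θ q ^ 2 :=
        Finset.sum_le_sum_of_subset_of_nonneg (Finset.subset_univ _) fun q _ _ => sq_nonneg _

lemma Wmat_sub (θ θ' : Params n L d) (ℓ : ℕ) : Wmat θ ℓ - Wmat θ' ℓ = Wmat (θ - θ') ℓ := by
  unfold Wmat; split_ifs <;> ext <;> simp

lemma Vmat_sub (θ θ' : Params n L d) (ℓ : ℕ) : Vmat θ ℓ - Vmat θ' ℓ = Vmat (θ - θ') ℓ := by
  unfold Vmat; split_ifs <;> ext <;> simp

lemma Umat_sub (θ θ' : Params n L d) : Umat θ - Umat θ' = Umat (θ - θ') := by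
  ext; simp [Umat]

lemma frobNorm_Wmat_le (θ : Params n L d) (ℓ : ℕ) : frobNorm (Wmat θ ℓ) ≤ paramNorm θ := by
  unfold Wmat
  split_ifs with h
  · refine frobNorm_le_paramNorm_of_embedding θ _
      ⟨fun p => Sum.inr (Sum.inl (⟨ℓ - 1, by omega⟩, p)), fun p q => by simp⟩ fun i j => rfl
  · simpa [frobNorm] using paramNorm_nonneg θ

lemma frobNorm_Vmat_le (θ : Params n L d) (ℓ : ℕ) : frobNorm (Vmat θ ℓ) ≤ paramNorm θ := by
  unfold Vmat
  split_ifs with h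
  · refine frobNorm_le_paramNorm_of_embedding θ _
      ⟨fun p => Sum.inr (Sum.inr (Sum.inl (⟨ℓ - 1, by omega⟩, p))), fun p q => by simp⟩
      fun i j => rfl
  · simpa [frobNorm] using paramNorm_nonneg θ

lemma frobNorm_Umat_le (θ : Params n L d) : frobNorm (Umat θ) ≤ paramNorm θ :=
  frobNorm_le_paramNorm_of_embedding θ _ ⟨fun p => Sum.inr (Sum.inr (Sum.inr p)), fun p q => by simp⟩
    fun i j => rfl

-- `Wmat θ ℓ` and `Vmat θ ℓ` are `0` outside `1 ≤ ℓ ≤ L`, so these bounds hold for every `ℓ`.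
lemma SpectralBounds.specNorm_Wmat_le {θ : Params n L d} (h : SpectralBounds θ) (ℓ : ℕ) :
    specNorm (Wmat θ ℓ) ≤ 3 * √n := by
  by_cases hℓ : 1 ≤ ℓ ∧ ℓ ≤ L
  · exact (h.2.2 ℓ hℓ.1 hℓ.2).1
  · simp [Wmat, hℓ, specNorm_zero]

lemma SpectralBounds.specNorm_Vmat_le {θ : Params n L d} (h : SpectralBounds θ) (ℓ : ℕ) :
    specNorm (Vmat θ ℓ) ≤ 3 * √n := by
  by_cases hℓ : 1 ≤ ℓ ∧ ℓ ≤ L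
  · exact (h.2.2 ℓ hℓ.1 hℓ.2).2
  · simp [Vmat, hℓ, specNorm_zero]

end Parameters

lemma inv_sqrt_natCast_le_one (d : ℕ) : (√(d : ℝ))⁻¹ ≤ 1 := by
  rcases Nat.eq_zero_or_pos d with rfl | hd
  · simp
  · exact inv_le_one_of_one_le₀ (Real.one_le_sqrt.mpr (by exact_mod_cast hd))

section ResNet

variable {n L d : ℕ} {φ : ℝ → ℝ} {α σv σw Cφ B : ℝ} {θ θ' : Params n L d} {x : Fin d → ℝ}

lemma xvec_succ (ℓ : ℕ) :
    xvec φ α σv σw θ x (ℓ + 1) = xvec φ α σv σw θ x ℓ +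
      (α * σv / √n) • Vmat θ (ℓ + 1) *ᵥ (φ ∘ gvec φ α σv σw θ x (ℓ + 1)) := rfl

lemma l2norm_gvec_succ_le (hσw : 0 ≤ σw) (hn : 0 < n) (hθ : SpectralBounds θ) (ℓ : ℕ) :
    l2norm (gvec φ α σv σw θ x (ℓ + 1)) ≤ 3 * σw * l2norm (xvec φ α σv σw θ x ℓ) := by
  have hsn : 0 < √(n : ℝ) := Real.sqrt_pos.mpr (by exact_mod_cast hn)
  rw [gvec, l2norm_smul, abs_of_nonneg (by positivity)]
  calc σw / √n * l2norm (Wmat θ (ℓ + 1) *ᵥ xvec φ α σv σw θ x ℓ)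
      ≤ σw / √n * (3 * √n * l2norm (xvec φ α σv σw θ x ℓ)) := by
        gcongr
        exact (l2norm_mulVec_le_specNorm _ _).trans
          (mul_le_mul_of_nonneg_right (hθ.specNorm_Wmat_le _) (l2norm_nonneg _))
    _ = 3 * σw * l2norm (xvec φ α σv σw θ x ℓ) := by field_simp

lemma l2norm_gvec_succ_sub_le (hσw : 0 ≤ σw) (hn : 0 < n) (hθ' : SpectralBounds θ') (ℓ : ℕ) :
    l2norm (gvec φ α σv σw θ x (ℓ + 1) - gvec φ α σv σw θ' x (ℓ + 1)) ≤
      σw / √n * paramNorm (θ - θ') * l2norm (xvec φ α σv σw θ x ℓ) +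
        3 * σw * l2norm (xvec φ α σv σw θ x ℓ - xvec φ α σv σw θ' x ℓ) := by
  have hsn : 0 < √(n : ℝ) := Real.sqrt_pos.mpr (by exact_mod_cast hn)
  rw [gvec, gvec, ← smul_sub, l2norm_smul, abs_of_nonneg (by positivity)]
  calc σw / √n * l2norm (Wmat θ (ℓ + 1) *ᵥ xvec φ α σv σw θ x ℓ -
        Wmat θ' (ℓ + 1) *ᵥ xvec φ α σv σw θ' x ℓ)
      ≤ σw / √n * (paramNorm (θ - θ') * l2norm (xvec φ α σv σw θ x ℓ) +
          3 * √n * l2norm (xvec φ α σv σw θ x ℓ - xvec φ α σv σw θ' x ℓ)) := by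
        gcongr
        refine (l2norm_mulVec_sub_mulVec_le _ _ _ _).trans (add_le_add ?_ ?_)
        · rw [Wmat_sub]
          exact mul_le_mul_of_nonneg_right (frobNorm_Wmat_le _ _) (l2norm_nonneg _)
        · exact mul_le_mul_of_nonneg_right (hθ'.specNorm_Wmat_le _) (l2norm_nonneg _)
    _ = _ := by field_simp

lemma l2norm_xvec_zero_le (hn : 0 < n) (hθ : SpectralBounds θ) (hx : l2norm x ≤ B) :
    l2norm (xvec φ α σv σw θ x 0) ≤ 3 * B * √n := by
  have hsn : 1 ≤ √(n : ℝ) := Real.one_le_sqrt.mpr (by exact_mod_cast hn)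
  have hB : 0 ≤ B := (l2norm_nonneg x).trans hx
  rw [xvec, l2norm_smul, abs_of_nonneg (by positivity)]
  calc (√d)⁻¹ * l2norm (Umat θ *ᵥ x) ≤ (√d)⁻¹ * ((√d + 2 * √n) * B) := by
        gcongr
        exact (l2norm_mulVec_le_specNorm _ _).trans (mul_le_mul hθ.2.1 hx (l2norm_nonneg _)
          (by positivity))
    _ = (√d)⁻¹ * √d * B + (√d)⁻¹ * (2 * √n * B) := by ring
    _ ≤ 1 * B + 1 * (2 * √n * B) := by gcongr; exacts [inv_mul_le_one, inv_sqrt_natCast_le_one d]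
    _ ≤ 3 * B * √n := by nlinarith

lemma l2norm_xvec_succ_le (hα : 0 ≤ α) (hσv : 0 ≤ σv) (hσw : 0 ≤ σw) (hn : 0 < n)
    (hφ : ∀ z, |φ z| ≤ Cφ * |z|) (hθ : SpectralBounds θ) (ℓ : ℕ) :
    l2norm (xvec φ α σv σw θ x (ℓ + 1)) ≤
      (1 + 9 * (α * σv * σw * Cφ)) * l2norm (xvec φ α σv σw θ x ℓ) := by
  have hsn : 0 < √(n : ℝ) := Real.sqrt_pos.mpr (by exact_mod_cast hn)
  have hCφ := nonneg_of_abs_le_mul_abs hφ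
  rw [xvec_succ]
  refine (l2norm_add_le _ _).trans ?_
  rw [l2norm_smul, abs_of_nonneg (by positivity)]
  calc l2norm (xvec φ α σv σw θ x ℓ) + α * σv / √n *
        l2norm (Vmat θ (ℓ + 1) *ᵥ (φ ∘ gvec φ α σv σw θ x (ℓ + 1)))
      ≤ l2norm (xvec φ α σv σw θ x ℓ) + α * σv / √n *
          (3 * √n * (Cφ * (3 * σw * l2norm (xvec φ α σv σw θ x ℓ)))) := by
        gcongr
        refine (l2norm_mulVec_le_specNorm _ _).trans
          (mul_le_mul (hθ.specNorm_Vmat_le _) ?_ (l2norm_nonneg _) (by positivity))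
        exact (l2norm_comp_le hφ _).trans
          (mul_le_mul_of_nonneg_left (l2norm_gvec_succ_le hσw hn hθ ℓ) hCφ)
    _ = _ := by field_simp; ring

lemma l2norm_xvec_le (hα : 0 ≤ α) (hσv : 0 ≤ σv) (hσw : 0 ≤ σw) (hn : 0 < n)
    (hφ : ∀ z, |φ z| ≤ Cφ * |z|) (hθ : SpectralBounds θ) (hx : l2norm x ≤ B) (ℓ : ℕ) :
    l2norm (xvec φ α σv σw θ x ℓ) ≤ 3 * B * √n * (1 + 9 * (α * σv * σw * Cφ)) ^ ℓ := by
  induction ℓ with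
  | zero => simpa using l2norm_xvec_zero_le hn hθ hx
  | succ ℓ ih =>
    have hc : 0 ≤ 1 + 9 * (α * σv * σw * Cφ) := by
      have := nonneg_of_abs_le_mul_abs hφ; positivity
    calc l2norm (xvec φ α σv σw θ x (ℓ + 1))
        ≤ (1 + 9 * (α * σv * σw * Cφ)) * l2norm (xvec φ α σv σw θ x ℓ) :=
          l2norm_xvec_succ_le hα hσv hσw hn hφ hθ ℓ
      _ ≤ (1 + 9 * (α * σv * σw * Cφ)) * (3 * B * √n * (1 + 9 * (α * σv * σw * Cφ)) ^ ℓ) := by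
          gcongr
      _ = _ := by ring

lemma l2norm_xvec_zero_sub_le (hx : l2norm x ≤ B) :
    l2norm (xvec φ α σv σw θ x 0 - xvec φ α σv σw θ' x 0) ≤ B * paramNorm (θ - θ') := by
  rw [xvec, xvec, ← smul_sub, ← sub_mulVec, Umat_sub, l2norm_smul, abs_of_nonneg (by positivity)]
  calc (√d)⁻¹ * l2norm (Umat (θ - θ') *ᵥ x) ≤ 1 * (paramNorm (θ - θ') * B) :=
        mul_le_mul (inv_sqrt_natCast_le_one d) ((l2norm_mulVec_le_frobNorm _ _).trans
          (mul_le_mul (frobNorm_Umat_le _) hx (l2norm_nonneg _) (paramNorm_nonneg _)))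
          (l2norm_nonneg _) zero_le_one
    _ = B * paramNorm (θ - θ') := by ring

lemma l2norm_xvec_succ_sub_le (hα : 0 ≤ α) (hσv : 0 ≤ σv) (hσw : 0 ≤ σw) (hn : 0 < n)
    (hφ : ∀ z, |φ z| ≤ Cφ * |z|) (hφlip : ∀ z z', |φ z - φ z'| ≤ Cφ * |z - z'|)
    (hθ : SpectralBounds θ) (hθ' : SpectralBounds θ') (ℓ : ℕ) :
    l2norm (xvec φ α σv σw θ x (ℓ + 1) - xvec φ α σv σw θ' x (ℓ + 1)) ≤
      (1 + 9 * (α * σv * σw * Cφ)) *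
          l2norm (xvec φ α σv σw θ x ℓ - xvec φ α σv σw θ' x ℓ) +
        6 * (α * σv * σw * Cφ) / √n * paramNorm (θ - θ') * l2norm (xvec φ α σv σw θ x ℓ) := by
  have hsn : 0 < √(n : ℝ) := Real.sqrt_pos.mpr (by exact_mod_cast hn)
  have hCφ := nonneg_of_abs_le_mul_abs hφ
  set P := paramNorm (θ - θ')
  set g := gvec φ α σv σw θ x (ℓ + 1)
  set g' := gvec φ α σv σw θ' x (ℓ + 1)
  have hP : 0 ≤ P := paramNorm_nonneg _
  have hsplit : xvec φ α σv σw θ x (ℓ + 1) - xvec φ α σv σw θ' x (ℓ + 1) =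
      (xvec φ α σv σw θ x ℓ - xvec φ α σv σw θ' x ℓ) +
        (α * σv / √n) • (Vmat θ (ℓ + 1) *ᵥ (φ ∘ g) - Vmat θ' (ℓ + 1) *ᵥ (φ ∘ g')) := by
    rw [xvec_succ, xvec_succ, smul_sub]; abel
  have hV : l2norm (Vmat θ (ℓ + 1) *ᵥ (φ ∘ g) - Vmat θ' (ℓ + 1) *ᵥ (φ ∘ g')) ≤
      P * (Cφ * (3 * σw * l2norm (xvec φ α σv σw θ x ℓ))) + 3 * √n * (Cφ * l2norm (g - g')) := by
    refine (l2norm_mulVec_sub_mulVec_le _ _ _ _).trans (add_le_add ?_ ?_)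
    · rw [Vmat_sub]
      exact mul_le_mul (frobNorm_Vmat_le _ _) ((l2norm_comp_le hφ _).trans
        (mul_le_mul_of_nonneg_left (l2norm_gvec_succ_le hσw hn hθ ℓ) hCφ))
        (l2norm_nonneg _) hP
    · exact mul_le_mul (hθ'.specNorm_Vmat_le _) (l2norm_comp_sub_comp_le hφlip _ _)
        (l2norm_nonneg _) (by positivity)
  rw [hsplit]
  refine (l2norm_add_le _ _).trans ?_
  rw [l2norm_smul, abs_of_nonneg (by positivity)]
  calc _ ≤ l2norm (xvec φ α σv σw θ x ℓ - xvec φ α σv σw θ' x ℓ) + α * σv / √n *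
          (P * (Cφ * (3 * σw * l2norm (xvec φ α σv σw θ x ℓ))) + 3 * √n * (Cφ *
            (σw / √n * P * l2norm (xvec φ α σv σw θ x ℓ) +
              3 * σw * l2norm (xvec φ α σv σw θ x ℓ - xvec φ α σv σw θ' x ℓ)))) := by
        gcongr
        exact hV.trans (by gcongr; exact l2norm_gvec_succ_sub_le hσw hn hθ' ℓ)
    _ = _ := by field_simp; ring

lemma l2norm_xvec_sub_le_paramNorm (hα : 0 ≤ α) (hσv : 0 ≤ σv) (hσw : 0 ≤ σw) (hn : 0 < n)
    (hφ : ∀ z, |φ z| ≤ Cφ * |z|) (hφlip : ∀ z z', |φ z - φ z'| ≤ Cφ * |z - z'|)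
    (hθ : SpectralBounds θ) (hθ' : SpectralBounds θ') (hx : l2norm x ≤ B) (ℓ : ℕ) :
    l2norm (xvec φ α σv σw θ x ℓ - xvec φ α σv σw θ' x ℓ) ≤
      B * (1 + 9 * (α * σv * σw * Cφ)) ^ ℓ * (1 + 18 * (α * σv * σw * Cφ) * ℓ) *
        paramNorm (θ - θ') := by
  have hsn : 0 < √(n : ℝ) := Real.sqrt_pos.mpr (by exact_mod_cast hn)
  have hB : 0 ≤ B := (l2norm_nonneg x).trans hx
  have hκ : 0 ≤ α * σv * σw * Cφ := by have := nonneg_of_abs_le_mul_abs hφ; positivity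
  have hP := paramNorm_nonneg (θ - θ')
  set κ := α * σv * σw * Cφ
  induction ℓ with
  | zero => simpa using l2norm_xvec_zero_sub_le hx
  | succ ℓ ih =>
    calc _ ≤ (1 + 9 * κ) * (B * (1 + 9 * κ) ^ ℓ * (1 + 18 * κ * ℓ) * paramNorm (θ - θ')) +
          6 * κ / √n * paramNorm (θ - θ') * (3 * B * √n * (1 + 9 * κ) ^ ℓ) := by
          refine (l2norm_xvec_succ_sub_le hα hσv hσw hn hφ hφlip hθ hθ' ℓ).trans ?_
          gcongr
          exact l2norm_xvec_le hα hσv hσw hn hφ hθ hx ℓ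
      _ ≤ (1 + 9 * κ) * (B * (1 + 9 * κ) ^ ℓ * (1 + 18 * κ * ℓ) * paramNorm (θ - θ')) +
          18 * κ * B * (1 + 9 * κ) * (1 + 9 * κ) ^ ℓ * paramNorm (θ - θ') := by
          rw [show 6 * κ / √n * paramNorm (θ - θ') * (3 * B * √n * (1 + 9 * κ) ^ ℓ) =
            18 * κ * B * 1 * (1 + 9 * κ) ^ ℓ * paramNorm (θ - θ') by field_simp; ring]
          gcongr
          linarith
      _ = _ := by push_cast; ring

lemma l2norm_gvec_succ_sub_le_paramNorm (hα : 0 ≤ α) (hσv : 0 ≤ σv) (hσw : 0 ≤ σw) (hn : 0 < n)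
    (hφ : ∀ z, |φ z| ≤ Cφ * |z|) (hφlip : ∀ z z', |φ z - φ z'| ≤ Cφ * |z - z'|)
    (hθ : SpectralBounds θ) (hθ' : SpectralBounds θ') (hx : l2norm x ≤ B) (ℓ : ℕ) :
    l2norm (gvec φ α σv σw θ x (ℓ + 1) - gvec φ α σv σw θ' x (ℓ + 1)) ≤
      3 * σw * (B * (1 + 9 * (α * σv * σw * Cφ)) ^ ℓ * (2 + 18 * (α * σv * σw * Cφ) * ℓ)) *
        paramNorm (θ - θ') := by
  have hsn : 0 < √(n : ℝ) := Real.sqrt_pos.mpr (by exact_mod_cast hn)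
  calc _ ≤ σw / √n * paramNorm (θ - θ') * (3 * B * √n * (1 + 9 * (α * σv * σw * Cφ)) ^ ℓ) +
        3 * σw * (B * (1 + 9 * (α * σv * σw * Cφ)) ^ ℓ * (1 + 18 * (α * σv * σw * Cφ) * ℓ) *
          paramNorm (θ - θ')) := by
        refine (l2norm_gvec_succ_sub_le hσw hn hθ' ℓ).trans ?_
        have hP := paramNorm_nonneg (θ - θ')
        gcongr
        · exact l2norm_xvec_le hα hσv hσw hn hφ hθ hx ℓ
        · exact l2norm_xvec_sub_le_paramNorm hα hσv hσw hn hφ hφlip hθ hθ' hx ℓ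
    _ = _ := by field_simp; ring

end ResNet

theorem forward_parameter_lipschitz_general
    (L d : ℕ)
    (α σv σw Cφ B : ℝ) (hα : 0 < α) (hσv : 0 < σv) (hσw : 0 < σw) (hCφ : 0 < Cφ)
    (hB : 0 ≤ B) :
    ∃ K : ℝ, 0 < K ∧
      ∀ (n : ℕ) (φ : ℝ → ℝ), Differentiable ℝ φ →
        (∀ z : ℝ, |φ z| ≤ Cφ * |z|) → (∀ z : ℝ, |deriv φ z| ≤ Cφ) →
        (∀ z z' : ℝ, |φ z - φ z'| ≤ Cφ * |z - z'|) →
        (∀ z z' : ℝ, |deriv φ z - deriv φ z'| ≤ Cφ * |z - z'|) →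
        ∀ x : Fin d → ℝ, l2norm x ≤ B →
        ∀ θ θ' : Params n L d, SpectralBounds θ → SpectralBounds θ' →
          (∀ ℓ : ℕ, ℓ ≤ L →
            l2norm (xvec φ α σv σw θ x ℓ - xvec φ α σv σw θ' x ℓ) ≤
              K * paramNorm (θ - θ')) ∧
          (∀ ℓ : ℕ, 1 ≤ ℓ → ℓ ≤ L →
            l2norm (gvec φ α σv σw θ x ℓ - gvec φ α σv σw θ' x ℓ) ≤
              K * paramNorm (θ - θ')) := by
  set κ := α * σv * σw * Cφ
  have hc : 1 ≤ 1 + 9 * κ := by simp only [κ]; linarith [show 0 < κ by positivity]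
  set M := B * (1 + 9 * κ) ^ L * (2 + 18 * κ * L)
  have hM : 0 ≤ M := by positivity
  have hM_mono {ℓ : ℕ} (hℓ : ℓ ≤ L) : B * (1 + 9 * κ) ^ ℓ * (2 + 18 * κ * ℓ) ≤ M := by
    simp only [M]
    gcongr
  refine ⟨(1 + 3 * σw) * M + 1, by positivity, ?_⟩
  intro n φ _ hφ _ hφlip _ x hx θ θ' hθ hθ'
  have hP := paramNorm_nonneg (θ - θ')
  rcases Nat.eq_zero_or_pos n with rfl | hn
  · simp only [l2norm_fin_zero]
    exact ⟨fun _ _ => by positivity, fun _ _ _ => by positivity⟩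
  constructor
  · intro ℓ hℓ
    refine (l2norm_xvec_sub_le_paramNorm hα.le hσv.le hσw.le hn hφ hφlip hθ hθ' hx ℓ).trans
      (mul_le_mul_of_nonneg_right ?_ hP)
    nlinarith [hM_mono hℓ, show 0 ≤ B * (1 + 9 * κ) ^ ℓ by positivity]
  · rintro (_ | ℓ) hℓ hℓL
    · omega
    refine (l2norm_gvec_succ_sub_le_paramNorm hα.le hσv.le hσw.le hn hφ hφlip hθ hθ' hx ℓ).trans
      (mul_le_mul_of_nonneg_right ?_ hP)
    nlinarith [hM_mono (ℓ := ℓ) (by omega)]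

/-- **Forward parameter-Lipschitz bound.** There is a constant K depending only on
L, α, σ_v, σ_w, C_φ, B and d (not on n) such that for all parameter vectors θ, θ̃
satisfying the spectral bounds: ‖x^{(ℓ)}(θ) − x^{(ℓ)}(θ̃)‖₂ ≤ K‖θ − θ̃‖₂ for ℓ = 0,…,L and
‖g^{(ℓ)}(θ) − g^{(ℓ)}(θ̃)‖₂ ≤ K‖θ − θ̃‖₂ for ℓ = 1,…,L. -/
theorem forward_parameter_lipschitz
    (L d : ℕ) (hL : 1 ≤ L) (hd : 1 ≤ d)
    (α σv σw Cφ B : ℝ) (hα : 0 < α) (hσv : 0 < σv) (hσw : 0 < σw) (hCφ : 0 < Cφ)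
    (hB : 0 ≤ B) :
    ∃ K : ℝ, 0 < K ∧
      ∀ (n : ℕ) (φ : ℝ → ℝ), Differentiable ℝ φ →
        (∀ z : ℝ, |φ z| ≤ Cφ * |z|) → (∀ z : ℝ, |deriv φ z| ≤ Cφ) →
        (∀ z z' : ℝ, |φ z - φ z'| ≤ Cφ * |z - z'|) →
        (∀ z z' : ℝ, |deriv φ z - deriv φ z'| ≤ Cφ * |z - z'|) →
        ∀ x : Fin d → ℝ, l2norm x ≤ B →
        ∀ θ θ' : Params n L d, SpectralBounds θ → SpectralBounds θ' →
          (∀ ℓ : ℕ, ℓ ≤ L →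
            l2norm (xvec φ α σv σw θ x ℓ - xvec φ α σv σw θ' x ℓ) ≤
              K * paramNorm (θ - θ')) ∧
          (∀ ℓ : ℕ, 1 ≤ ℓ → ℓ ≤ L →
            l2norm (gvec φ α σv σw θ x ℓ - gvec φ α σv σw θ' x ℓ) ≤
              K * paramNorm (θ - θ')) :=
  forward_parameter_lipschitz_general L d α σv σw Cφ B hα hσv hσw hCφ hB

end
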